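/- arXiv:1911.00207 — 3 statements merged into one kernel-verified Lean document; each statement's English description precedes it below -/
import Mathlib

section
/- Let M be a matroid on a finite set E with rank function r, and let (C_1, …, C_t) be a sequence of circuits of M that is proper, meaning C_i is not contained in C_1 ∪ … ∪ C_{i−1} for all 2 ≤ i ≤ t. Then for every X ⊆ E, r(X) ≤ |X ∪ C_1 ∪ … ∪ C_t| − t. -/
/-!
Adding a circuit `C` to a set `Y` with `C ⊄ Y` raises the nullity `|Y| - r(Y)` by at least one:
an element `e ∈ C \ Y` lies in the closure of `C - e`, so it enlarges `Y ∪ C` without enlarging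
its rank. Hence the union `U` of a proper sequence of `t` circuits has nullity at least `t`, and
`r(X) ≤ r(U) + |X \ U| ≤ |U| - t + |X \ U| = |X ∪ U| - t`.
-/

open Set Matroid

variable {α : Type*}

/-- A circuit of a matroid: a minimal dependent subset of the ground set. -/
def IsCircuit (M : Matroid α) (C : Set α) : Prop :=
  C ⊆ M.E ∧ ¬ M.Indep C ∧ ∀ e ∈ C, M.Indep (C \ {e})

/-- The (natural-number) rank of a set in a matroid: the size of a largest
independent subset. -/
noncomputable def nr (M : Matroid α) (X : Set α) : ℕ :=
  sSup {k | ∃ I, I ⊆ X ∧ M.Indep I ∧ I.ncard = k}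

/-- The rank of a matroid. -/
noncomputable def mrk (M : Matroid α) : ℕ := nr M M.E

/-- A cyclic set: a (possibly empty) union of circuits. -/
def Cyclic (M : Matroid α) (X : Set α) : Prop :=
  X ⊆ M.E ∧ ∀ e ∈ X, ∃ C, _root_.IsCircuit M C ∧ C ⊆ X ∧ e ∈ C

/-- A modular pair of sets in a matroid. -/
def ModPair (M : Matroid α) (X Y : Set α) : Prop :=
  nr M X + nr M Y = nr M (X ∩ Y) + nr M (X ∪ Y)

/-- A coloop of a matroid: an element contained in every base. -/
def IsColoop (M : Matroid α) (e : α) : Prop := ∀ B, M.IsBase B → e ∈ B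

/-- A proper sequence of circuits of a matroid: each circuit is not contained in the
union of the preceding ones. -/
def ProperCircuitSeq (M : Matroid α) {t : ℕ} (C : Fin t → Set α) : Prop :=
  (∀ i, _root_.IsCircuit M (C i)) ∧
    ∀ i : Fin t, 0 < (i : ℕ) → ¬ C i ⊆ ⋃ j ∈ {j : Fin t | j < i}, C j

section

variable {M : Matroid α} {C X Y : Set α}

/-- `nr` is an `sSup` in `ℕ`, so it is `0` on sets of infinite rank. -/
theorem Matroid.IsRkFinite.cast_nr (hX : M.IsRkFinite X) :
    (nr M X : ℕ∞) = M.eRk X := by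
  obtain ⟨I, hI, hIfin⟩ := hX.exists_finite_isBasis'
  have hnr : nr M X = I.ncard := by
    refine IsGreatest.csSup_eq ⟨⟨I, hI.subset, hI.indep, rfl⟩, ?_⟩
    rintro k ⟨J, hJX, hJ, rfl⟩
    have hJfin : J.Finite := hX.finite_of_indep_subset hJ hJX
    rw [← Nat.cast_le (α := ℕ∞), hJfin.cast_ncard_eq, hIfin.cast_ncard_eq, hI.encard_eq_eRk]
    exact hJ.encard_le_eRk_of_subset hJX
  rw [hnr, hIfin.cast_ncard_eq, hI.encard_eq_eRk]

theorem isCircuit_iff_matroidIsCircuit :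
    _root_.IsCircuit M C ↔ M.IsCircuit C := by
  rw [isCircuit_iff_dep_forall_sdiff_singleton_indep, Dep, _root_.IsCircuit]
  tauto

theorem Matroid.IsCircuit.eRk_union_add_one_le (hC : M.IsCircuit C) (hCY : ¬ C ⊆ Y) : M.eRk (Y ∪ C) + 1 ≤ M.eRk Y + (C \ Y).encard := by
  obtain ⟨e, heC, heY⟩ := not_subset.mp hCY
  have hspan : Y ∪ C ⊆ Y ∪ M.closure (C \ {e}) :=
    union_subset_union_right Y (hC.subset_closure_sdiff_singleton e)
  calc M.eRk (Y ∪ C) + 1 ≤ M.eRk (Y ∪ M.closure (C \ {e})) + 1 := by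
        gcongr; exact M.eRk_mono hspan
    _ = M.eRk (Y ∪ ((C \ {e}) \ Y)) + 1 := by
        rw [eRk_union_closure_right_eq, union_sdiff_self]
    _ ≤ M.eRk Y + ((C \ Y) \ {e}).encard + 1 := by
        rw [sdiff_right_comm]
        gcongr
        exact M.eRk_union_le_eRk_add_encard _ _
    _ = M.eRk Y + (C \ Y).encard := by
        rw [add_assoc, encard_sdiff_singleton_add_one (show e ∈ C \ Y from ⟨heC, heY⟩)]

variable [Finite α]

theorem cast_nr_eq_eRk (M : Matroid α) (X : Set α) : (nr M X : ℕ∞) = M.eRk X :=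
  (M.isRkFinite_of_finite X.toFinite).cast_nr

theorem nr_mono (hXY : X ⊆ Y) : nr M X ≤ nr M Y := by
  rw [← Nat.cast_le (α := ℕ∞), cast_nr_eq_eRk, cast_nr_eq_eRk]
  exact M.eRk_mono hXY

theorem nr_union_le_nr_add_ncard (M : Matroid α) (X Y : Set α) :
    nr M (X ∪ Y) ≤ nr M X + Y.ncard := by
  rw [← Nat.cast_le (α := ℕ∞), Nat.cast_add, cast_nr_eq_eRk, cast_nr_eq_eRk,
    Y.toFinite.cast_ncard_eq]
  exact M.eRk_union_le_eRk_add_encard X Y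

theorem Matroid.IsCircuit.nr_union_add_one_le (hC : M.IsCircuit C) (hCY : ¬ C ⊆ Y) : nr M (Y ∪ C) + 1 ≤ nr M Y + (C \ Y).ncard := by
  rw [← Nat.cast_le (α := ℕ∞)]
  push_cast
  rw [cast_nr_eq_eRk, cast_nr_eq_eRk, (C \ Y).toFinite.cast_ncard_eq]
  exact hC.eRk_union_add_one_le hCY

end

namespace ProperCircuitSeq

variable {M : Matroid α} {t : ℕ}

theorem isCircuit {C : Fin t → Set α} (hC : ProperCircuitSeq M C) (i : Fin t) :
    M.IsCircuit (C i) :=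
  isCircuit_iff_matroidIsCircuit.mp (hC.1 i)

theorem castSucc {C : Fin (t + 1) → Set α} (hC : ProperCircuitSeq M C) :
    ProperCircuitSeq M (fun i : Fin t ↦ C i.castSucc) := by
  refine ⟨fun i ↦ hC.1 i.castSucc, fun i hi hsub ↦ hC.2 i.castSucc hi (hsub.trans ?_)⟩
  exact iUnion₂_subset fun j hj ↦
    subset_biUnion_of_mem (u := C) (Fin.castSucc_lt_castSucc_iff.mpr hj)

theorem not_subset_biUnion_lt {C : Fin t → Set α} (hC : ProperCircuitSeq M C) (i : Fin t) :
    ¬ C i ⊆ ⋃ j ∈ {j : Fin t | j < i}, C j := by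
  rcases (i : ℕ).eq_zero_or_pos with hi | hi
  · have hnone : {j : Fin t | j < i} = ∅ := by
      ext j
      simp [Fin.lt_def, hi]
    simpa [hnone] using (hC.isCircuit i).nonempty.ne_empty
  · exact hC.2 i hi

theorem not_subset_iUnion_castSucc {C : Fin (t + 1) → Set α} (hC : ProperCircuitSeq M C) :
    ¬ C (Fin.last t) ⊆ ⋃ i : Fin t, C i.castSucc := fun hsub ↦
  hC.not_subset_biUnion_lt (Fin.last t) <| hsub.trans <|
    iUnion_subset fun i ↦ subset_biUnion_of_mem (u := C) (Fin.castSucc_lt_last i)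

theorem nr_iUnion_add_le [Finite α] {C : Fin t → Set α} (hC : ProperCircuitSeq M C) :
    nr M (⋃ i, C i) + t ≤ (⋃ i, C i).ncard := by
  induction t with
  | zero => simpa using cast_nr_eq_eRk M ∅
  | succ t ih =>
    have hsplit : ⋃ i, C i = (⋃ i : Fin t, C i.castSucc) ∪ C (Fin.last t) :=
      iUnion_fin_add_one_eq_iUnion_castSucc C
    have hstep := (hC.isCircuit (Fin.last t)).nr_union_add_one_le hC.not_subset_iUnion_castSucc
    have hcard := ncard_sdiff_add_ncard (C (Fin.last t)) (⋃ i : Fin t, C i.castSucc)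
    rw [union_comm] at hcard
    have := ih hC.castSucc
    rw [hsplit]
    omega

end ProperCircuitSeq

theorem rank_le_of_properCircuitSeq_general [Fintype α] (M : Matroid α) {t : ℕ}
    (C : Fin t → Set α) (hC : ProperCircuitSeq M C) (X : Set α) :
    nr M X + t ≤ (X ∪ ⋃ i, C i).ncard := by
  set U := ⋃ i, C i
  calc nr M X + t ≤ nr M (U ∪ (X \ U)) + t := by
        gcongr
        exact nr_mono (subset_union_right.trans (union_sdiff_self ..).superset)
    _ ≤ nr M U + (X \ U).ncard + t := by gcongr; exact nr_union_le_nr_add_ncard M U _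
    _ ≤ (X \ U).ncard + U.ncard := by linarith [hC.nr_iUnion_add_le]
    _ = (X ∪ U).ncard := ncard_sdiff_add_ncard X U

/-- If `(C_1, …, C_t)` is a proper sequence of circuits of `M`, then
for every `X ⊆ E` we have `r(X) ≤ |X ∪ C_1 ∪ … ∪ C_t| − t`. -/
theorem rank_le_of_properCircuitSeq [Fintype α] (M : Matroid α) {t : ℕ}
    (C : Fin t → Set α) (hC : ProperCircuitSeq M C) (X : Set α) (hX : X ⊆ M.E) :
    nr M X + t ≤ (X ∪ ⋃ i, C i).ncard :=
  rank_le_of_properCircuitSeq_general M C hC X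
end

section
/- Let M be a matroid on a finite set E whose non-spanning circuits are exactly the members of a family C_0, and let N be a matroid on E in which every member of C_0 is a circuit and such that every independent set of M is independent in N. If N has the same rank as M, then N = M. -/
open Set Matroid

variable {α : Type*}

/-! A set that is independent in `N` but dependent in `M` would contain an `M`-circuit `C`
independent in `N`. Since every non-spanning `M`-circuit is an `N`-circuit, `C` spans `M`, so
`r(M) + 1 = |C| ≤ r(N)`, contradicting `r(N) = r(M)`. -/

namespace Matroid

variable {M N : Matroid α} {C : Set α}

lemma IsCircuit.eRank_add_one_eq_of_spanning (hC : M.IsCircuit C) (hsp : M.Spanning C) :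
    M.eRank + 1 = C.encard :=
  hsp.eRk_eq ▸ hC.eRk_add_one_eq

theorem eq_of_forall_indep_of_eRank_le [M.RankFinite] (hE : N.E = M.E)
    (hNC : ∀ C, M.IsCircuit C → ¬ M.Spanning C → N.IsCircuit C)
    (hW : ∀ I, M.Indep I → N.Indep I) (hrk : N.eRank ≤ M.eRank) : N = M := by
  refine ext_indep hE fun I hI ↦ ⟨fun hNI ↦ ?_, hW I⟩
  by_contra hMI
  obtain ⟨C, hCI, hC⟩ := ((M.not_indep_iff (hE ▸ hI)).1 hMI).exists_isCircuit_subset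
  have hCN : N.Indep C := hNI.subset hCI
  have hsp : M.Spanning C := by_contra fun h ↦ (hNC C hC h).not_indep hCN
  have hle : M.eRank + 1 ≤ M.eRank :=
    calc M.eRank + 1 = C.encard := hC.eRank_add_one_eq_of_spanning hsp
      _ ≤ N.eRank := hCN.encard_le_eRank
      _ ≤ M.eRank := hrk
  exact (ENat.add_one_le_iff (M.eRank_ne_top_iff.2 inferInstance)).1 hle |>.false

end Matroid

lemma isCircuit_iff_isCircuit {M : Matroid α} {C : Set α} :
    _root_.IsCircuit M C ↔ M.IsCircuit C := by
  rw [Matroid.isCircuit_iff_dep_forall_sdiff_singleton_indep, Matroid.Dep, _root_.IsCircuit]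
  tauto

lemma nr_eq_eRk (M : Matroid α) [M.RankFinite] (X : Set α) : (nr M X : ℕ∞) = M.eRk X := by
  obtain ⟨I, hI⟩ := M.exists_isBasis' X
  have hIfin : I.Finite := hI.indep.finite
  have hmax : IsGreatest {k | ∃ J, J ⊆ X ∧ M.Indep J ∧ J.ncard = k} I.ncard := by
    refine ⟨⟨I, hI.subset, hI.indep, rfl⟩, ?_⟩
    rintro _ ⟨J, hJX, hJ, rfl⟩
    have hJfin : J.Finite := hJ.finite
    rw [← ENat.natCast_le_natCast, hJfin.cast_ncard_eq, hIfin.cast_ncard_eq, hI.encard_eq_eRk]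
    exact hJ.encard_le_eRk_of_subset hJX
  rw [nr, hmax.csSup_eq, hIfin.cast_ncard_eq, hI.encard_eq_eRk]

lemma mrk_eq_eRank (M : Matroid α) [M.RankFinite] : (mrk M : ℕ∞) = M.eRank := by
  rw [mrk, nr_eq_eRk, eRk_ground]

/-- Let `M` be a matroid whose non-spanning circuits are exactly the
members of a family `C₀`, and let `N` be a matroid on the same ground set in which every
member of `C₀` is a circuit and such that every independent set of `M` is independent
in `N`. If `N` has the same rank as `M`, then `N = M`. -/
theorem eq_of_weakLE_rank_eq [Fintype α] (M N : Matroid α) (hE : N.E = M.E)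
    (C₀ : Set (Set α))
    (hC₀ : ∀ C, C ∈ C₀ ↔ (_root_.IsCircuit M C ∧ ¬ M.Spanning C))
    (hNC : ∀ C ∈ C₀, _root_.IsCircuit N C)
    (hW : ∀ I, M.Indep I → N.Indep I)
    (hrk : mrk N = mrk M) :
    N = M := by
  refine Matroid.eq_of_forall_indep_of_eRank_le hE (fun C hC hsp ↦ ?_) hW ?_
  · exact isCircuit_iff_isCircuit.1 (hNC C ((hC₀ C).2 ⟨isCircuit_iff_isCircuit.2 hC, hsp⟩))
  · rw [← mrk_eq_eRank, ← mrk_eq_eRank, hrk]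
end

section
/- In the complete graph K_n on vertices v_1,…,v_n with n ≥ d + 2, there exists a proper K_{d+2}-sequence (C_1, …, C_t) of length t = binom(n−d, 2) such that C_1 ∪ … ∪ C_t = E(K_n), where each C_i is the edge set of a copy of K_{d+2} and 'proper' means C_i ⊄ C_1 ∪ … ∪ C_{i−1} for all i ≥ 2. -/
open Set Matroid

variable {α : Type*}

/-- The edges of the complete graph on a vertex set `X`. -/
def edgesOn {V : Type*} (X : Set V) : Set (Sym2 V) :=
  {e | ¬ e.IsDiag ∧ ∀ v ∈ e, v ∈ X}

/-- The set of vertices incident to an edge set. -/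
def verts {V : Type*} (F : Set (Sym2 V)) : Set V := {v | ∃ e ∈ F, v ∈ e}

/-- The degree of a vertex in an edge set. -/
noncomputable def edeg {V : Type*} (F : Set (Sym2 V)) (v : V) : ℕ :=
  {e ∈ F | v ∈ e}.ncard

/-- A `K_k`-sequence: each term is the edge set of a complete graph on `k` vertices. -/
def IsKSeq (n k : ℕ) {t : ℕ} (C : Fin t → Set (Sym2 (Fin n))) : Prop :=
  ∀ i, ∃ X : Set (Fin n), X.ncard = k ∧ C i = edgesOn X

/-- A proper sequence of edge sets: each term is not contained in the union of the
preceding ones. -/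
def ProperSeq {n : ℕ} {t : ℕ} (C : Fin t → Set (Sym2 (Fin n))) : Prop :=
  ∀ i : Fin t, 0 < (i : ℕ) → ¬ C i ⊆ ⋃ j ∈ {j : Fin t | j < i}, C j

/-!
Fix a set `D` of `d` vertices. For every pair `{a, b}` of the remaining `n - d` vertices take the
clique on `D ∪ {a, b}`; these are `(n - d choose 2)` copies of `K_{d+2}`. The edge `ab` lies in
no other of them, so they form a proper sequence in any order, and every edge of `K_n` has at
most two endpoints outside `D`, so it lies in one of them.
-/

open Finset

lemma mem_edgesOn {V : Type*} {X : Set V} {a b : V} :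
    s(a, b) ∈ edgesOn X ↔ a ≠ b ∧ a ∈ X ∧ b ∈ X := by
  simp [edgesOn, or_imp, forall_and]

lemma properSeq_of_forall_exists_mem_unique {n t : ℕ} {C : Fin t → Set (Sym2 (Fin n))}
    (h : ∀ i, ∃ x ∈ C i, ∀ j, x ∈ C j → j = i) : ProperSeq C := by
  intro i _ hsub
  obtain ⟨x, hxi, hx⟩ := h i
  obtain ⟨j, hji, hxj⟩ := Set.mem_iUnion₂.1 (hsub hxi)
  exact (hx j hxj ▸ hji : i < i).false

section Cone

variable {V : Type*} [Fintype V] [DecidableEq V] {D : Finset V}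

lemma card_union_of_mem_powersetCard_compl {s : Finset V} {k : ℕ}
    (hs : s ∈ Dᶜ.powersetCard k) : #(D ∪ s) = #D + k := by
  rw [Finset.mem_powersetCard] at hs
  rw [card_union_of_disjoint (disjoint_right.2 fun _ h => mem_compl.1 (hs.1 h)), hs.2]

lemma exists_edge_unique_of_mem_powersetCard_two_compl {s : Finset V}
    (hs : s ∈ Dᶜ.powersetCard 2) :
    ∃ x ∈ edgesOn (↑(D ∪ s) : Set V),
      ∀ t ∈ Dᶜ.powersetCard 2, x ∈ edgesOn (↑(D ∪ t) : Set V) → t = s := by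
  obtain ⟨hsD, hs2⟩ := Finset.mem_powersetCard.1 hs
  obtain ⟨a, b, hab, rfl⟩ := card_eq_two.1 hs2
  refine ⟨s(a, b), mem_edgesOn.2 ⟨hab, by simp, by simp⟩, fun t ht hx => ?_⟩
  obtain ⟨-, ha, hb⟩ := mem_edgesOn.1 hx
  have mem_t : ∀ v ∈ ({a, b} : Finset V), v ∈ D ∪ t → v ∈ t := fun v hv hvt =>
    (Finset.mem_union.1 hvt).resolve_left (mem_compl.1 (hsD hv))
  have hsub : ({a, b} : Finset V) ⊆ t := by
    simp only [Finset.insert_subset_iff, Finset.singleton_subset_iff]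
    exact ⟨mem_t a (by simp) ha, mem_t b (by simp) hb⟩
  exact (eq_of_subset_of_card_le hsub (by rw [hs2, (Finset.mem_powersetCard.1 ht).2])).symm

lemma exists_mem_powersetCard_two_compl_subset_union {A : Finset V} (hA : #A ≤ 2)
    (hD : 2 ≤ #Dᶜ) : ∃ s ∈ Dᶜ.powersetCard 2, A ⊆ D ∪ s := by
  obtain ⟨s, hAs, hsD, hs⟩ := Finset.exists_subsuperset_card_eq
    (fun v hv => mem_compl.2 (mem_sdiff.1 hv).2 : A \ D ⊆ Dᶜ)
    ((Finset.card_le_card sdiff_subset).trans hA) hD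
  exact ⟨s, Finset.mem_powersetCard.2 ⟨hsD, hs⟩,
    fun v hv => by
      by_cases hvD : v ∈ D
      · exact mem_union_left _ hvD
      · exact mem_union_right _ (hAs (Finset.mem_sdiff.2 ⟨hv, hvD⟩))⟩

lemma iUnion_edgesOn_union_powersetCard_two_compl (hD : 2 ≤ #Dᶜ) :
    ⋃ s : Dᶜ.powersetCard 2, edgesOn (↑(D ∪ s.1) : Set V) = edgesOn univ := by
  ext z
  induction z using Sym2.ind with
  | _ u v =>
  simp only [Set.mem_iUnion, mem_edgesOn, Set.mem_univ, and_true]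
  refine ⟨fun ⟨_, huv, _⟩ => huv, fun huv => ?_⟩
  obtain ⟨s, hs, huvs⟩ := exists_mem_powersetCard_two_compl_subset_union card_le_two hD
    (A := {u, v})
  exact ⟨⟨s, hs⟩, huv, huvs (by simp), huvs (by simp)⟩

end Cone

/-- For `n ≥ d+2` there is a proper `K_{d+2}`-sequence of length
`(n−d choose 2)` whose union is `E(K_n)`. -/
theorem exists_proper_Kd2_seq_covering (n d : ℕ) (hn : d + 2 ≤ n) :
    ∃ C : Fin (Nat.choose (n - d) 2) → Set (Sym2 (Fin n)),
      IsKSeq n (d + 2) C ∧ ProperSeq C ∧ (⋃ i, C i) = edgesOn (univ : Set (Fin n)) := by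
  obtain ⟨D, -, hD⟩ := Finset.exists_subset_card_eq (s := (univ : Finset (Fin n)))
    (by rw [card_univ, Fintype.card_fin]; omega : d ≤ #univ)
  have hDc : #Dᶜ = n - d := by rw [card_compl, Fintype.card_fin, hD]
  let e : Fin ((n - d).choose 2) ≃ Dᶜ.powersetCard 2 :=
    (Fintype.equivFinOfCardEq (by rw [Fintype.card_coe, card_powersetCard, hDc])).symm
  refine ⟨fun i => edgesOn ↑(D ∪ (e i).1), fun i => ⟨_, ?_, rfl⟩, ?_, ?_⟩
  · rw [ncard_coe_finset, card_union_of_mem_powersetCard_compl (e i).2, hD]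
  · refine properSeq_of_forall_exists_mem_unique fun i => ?_
    obtain ⟨x, hx, huniq⟩ := exists_edge_unique_of_mem_powersetCard_two_compl (e i).2
    exact ⟨x, hx, fun j hj => e.injective (Subtype.ext (huniq _ (e j).2 hj))⟩
  · rw [e.surjective.iUnion_comp (fun s => edgesOn (↑(D ∪ s.1) : Set (Fin n)))]
    exact iUnion_edgesOn_union_powersetCard_two_compl (by omega)
end
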